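/- arXiv:2511.17382 — 4 statements merged into one kernel-verified Lean document; each statement's English description precedes it below -/
import Mathlib

section
/- For a Schwartz function f : ℝ³ → ℝ, the homogeneous Sobolev norm of order -3/2 is finite, i.e. ∫_{ℝ³} |k|^{-3} |f̂(k)|² dk < ∞, if and only if f has vanishing spatial average, ∫_{ℝ³} f(x) dx = 0. -/
/-!
With the paper's sign and `2π` conventions, `ft f` is Mathlib's Fourier transform of `f`
evaluated at `-k / 2π`, hence again a Schwartz function, and `ft f 0 = ∫ f`. In dimension `d`
the weight `‖k‖⁻ᵈ` fails (logarithmically) to be integrable near `0`, so if `ft f 0 ≠ 0` the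
integral diverges. If `ft f 0 = 0`, the Lipschitz bound `‖ft f k‖ ≤ K ‖k‖` makes the integrand
`O(‖k‖²⁻ᵈ)` near `0`, and away from `0` it is dominated by `sup ‖ft f‖ · ‖ft f k‖`.
-/

open MeasureTheory Real

noncomputable section

/-- Fourier transform on `ℝ³` with the paper's convention
`f̂(k) = ∫ f(x) exp(i k·x) dx`. -/
def ft (f : EuclideanSpace ℝ (Fin 3) → ℂ) (k : EuclideanSpace ℝ (Fin 3)) : ℂ :=
  ∫ x, f x * Complex.exp (Complex.I * ((inner ℝ k x : ℝ) : ℂ))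

end

open Metric Module Set
open scoped FourierTransform

section

variable {E : Type*} [NormedAddCommGroup E] [NormedSpace ℝ E] [FiniteDimensional ℝ E]
  [MeasurableSpace E] [BorelSpace E] [Nontrivial E] {μ : Measure E} [μ.IsAddHaarMeasure]

theorem not_integrableOn_ball_norm_rpow_neg_finrank {r : ℝ} (hr : 0 < r) :
    ¬ IntegrableOn (fun x : E ↦ ‖x‖ ^ (-(finrank ℝ E : ℝ))) (ball 0 r) μ := by
  rw [integrableOn_fun_norm_addHaar μ (f := fun y ↦ y ^ (-(finrank ℝ E : ℝ))),
    integrableOn_congr_fun (g := fun y ↦ y ^ (-1 : ℝ)) _ measurableSet_Ioo,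
    intervalIntegral.integrableOn_Ioo_rpow_iff hr]
  · exact lt_irrefl _
  · intro y hy
    have hd : 1 ≤ finrank ℝ E := finrank_pos
    dsimp only
    rw [smul_eq_mul, ← rpow_natCast, ← rpow_add hy.1, Nat.cast_sub hd]
    ring_nf

end

namespace SchwartzMap

variable {E F : Type*} [NormedAddCommGroup E] [NormedSpace ℝ E]
  [NormedAddCommGroup F] [NormedSpace ℝ F]

theorem exists_lipschitzWith (f : 𝓢(E, F)) : ∃ K, LipschitzWith K f :=
  ⟨(SchwartzMap.seminorm ℝ 0 0 (fderivCLM ℝ E F f)).toNNReal,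
    lipschitzWith_of_nnnorm_fderiv_le f.differentiable fun x ↦ by
      rw [← NNReal.coe_le_coe, coe_nnnorm, Real.coe_toNNReal _ (apply_nonneg _ _),
        ← fderivCLM_apply ℝ]
      exact norm_le_seminorm ℝ _ x⟩

variable [MeasurableSpace E] [BorelSpace E] {μ : Measure E}

theorem aestronglyMeasurable_norm_rpow_mul_norm_sq (f : 𝓢(E, F)) (s : ℝ) :
    AEStronglyMeasurable (fun k ↦ ‖k‖ ^ s * ‖f k‖ ^ 2) μ :=
  have := f.continuous.norm.measurable
  Measurable.aestronglyMeasurable (by fun_prop)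

variable [FiniteDimensional ℝ E] [Nontrivial E] [μ.IsAddHaarMeasure]

theorem integrable_norm_rpow_neg_finrank_mul_norm_sq_of_map_zero (f : 𝓢(E, F)) (hf : f 0 = 0) :
    Integrable (fun k ↦ ‖k‖ ^ (-(finrank ℝ E : ℝ)) * ‖f k‖ ^ 2) μ := by
  have hmeas := f.aestronglyMeasurable_norm_rpow_mul_norm_sq (μ := μ) (-(finrank ℝ E : ℝ))
  obtain ⟨K, hK⟩ := f.exists_lipschitzWith
  rw [← integrableOn_univ, ← union_compl_self (ball (0 : E) 1)]
  refine IntegrableOn.union ?_ ?_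
  · have hd : 1 ≤ finrank ℝ E := finrank_pos
    refine integrableOn_ball_of_norm_le_rpow hd (C := K ^ 2) (α := finrank ℝ E - 2)
      (by linarith) (ae_restrict_of_forall_mem measurableSet_ball fun k _ ↦ ?_) hmeas
    have hfk : ‖f k‖ ≤ K * ‖k‖ := by simpa [hf] using hK.dist_le_mul k 0
    rw [norm_of_nonneg (by positivity)]
    rcases eq_or_ne k 0 with rfl | hk
    · rw [hf, norm_zero, norm_zero, zero_pow two_ne_zero, mul_zero]
      positivity
    calc ‖k‖ ^ (-(finrank ℝ E : ℝ)) * ‖f k‖ ^ 2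
        ≤ ‖k‖ ^ (-(finrank ℝ E : ℝ)) * (K * ‖k‖) ^ 2 := by gcongr
      _ = K ^ 2 * ‖k‖ ^ (-(finrank ℝ E - 2 : ℝ)) := by
          rw [neg_sub, sub_eq_neg_add, rpow_add (norm_pos_iff.mpr hk), rpow_two]
          ring
  · set M := SchwartzMap.seminorm ℝ 0 0 f
    refine ((f.integrable (μ := μ)).norm.const_mul M).integrableOn.mono' hmeas.restrict
      (ae_restrict_of_forall_mem measurableSet_ball.compl fun k hk ↦ ?_)
    have hk1 : 1 ≤ ‖k‖ := by simpa using hk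
    have hweight : ‖k‖ ^ (-(finrank ℝ E : ℝ)) ≤ 1 :=
      rpow_le_one_of_one_le_of_nonpos hk1 (by simp)
    have hfM : ‖f k‖ ≤ M := norm_le_seminorm ℝ f k
    rw [norm_of_nonneg (by positivity)]
    calc ‖k‖ ^ (-(finrank ℝ E : ℝ)) * ‖f k‖ ^ 2 ≤ 1 * (M * ‖f k‖) := by
          rw [sq]; gcongr
      _ = M * ‖f k‖ := one_mul _

theorem map_zero_eq_zero_of_integrable_norm_rpow_neg_finrank_mul_norm_sq (f : 𝓢(E, F))
    (h : Integrable (fun k ↦ ‖k‖ ^ (-(finrank ℝ E : ℝ)) * ‖f k‖ ^ 2) μ) :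
    f 0 = 0 := by
  by_contra hf0
  have hc : 0 < ‖f 0‖ := norm_pos_iff.mpr hf0
  obtain ⟨ε, hε, hfε⟩ := Metric.eventually_nhds_iff_ball.mp
    ((f.continuous.norm.tendsto 0).eventually (lt_mem_nhds (half_lt_self hc)))
  refine not_integrableOn_ball_norm_rpow_neg_finrank (μ := μ) hε
    ((h.integrableOn.const_mul (4 / ‖f 0‖ ^ 2)).mono'
      (Measurable.aestronglyMeasurable (by fun_prop))
      (ae_restrict_of_forall_mem measurableSet_ball fun k hk ↦ ?_))
  have hfk : 1 ≤ 4 / ‖f 0‖ ^ 2 * ‖f k‖ ^ 2 := by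
    rw [div_mul_eq_mul_div, le_div_iff₀ (by positivity)]
    nlinarith [hfε k hk]
  rw [norm_of_nonneg (by positivity)]
  calc ‖k‖ ^ (-(finrank ℝ E : ℝ)) = ‖k‖ ^ (-(finrank ℝ E : ℝ)) * 1 := (mul_one _).symm
    _ ≤ ‖k‖ ^ (-(finrank ℝ E : ℝ)) * (4 / ‖f 0‖ ^ 2 * ‖f k‖ ^ 2) := by gcongr
    _ = 4 / ‖f 0‖ ^ 2 * (‖k‖ ^ (-(finrank ℝ E : ℝ)) * ‖f k‖ ^ 2) := by ring

theorem integrable_norm_rpow_neg_finrank_mul_norm_sq_iff (f : 𝓢(E, F)) :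
    Integrable (fun k ↦ ‖k‖ ^ (-(finrank ℝ E : ℝ)) * ‖f k‖ ^ 2) μ ↔ f 0 = 0 :=
  ⟨f.map_zero_eq_zero_of_integrable_norm_rpow_neg_finrank_mul_norm_sq,
    f.integrable_norm_rpow_neg_finrank_mul_norm_sq_of_map_zero⟩

end SchwartzMap

theorem ft_eq_fourier (g : EuclideanSpace ℝ (Fin 3) → ℂ) (k : EuclideanSpace ℝ (Fin 3)) :
    ft g k = 𝓕 g ((-(2 * π)⁻¹) • k) := by
  rw [Real.fourier_eq', ft]
  congr 1 with x
  rw [smul_eq_mul, mul_comm (g x), real_inner_smul_right, real_inner_comm]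
  congr 2
  push_cast
  field_simp

theorem ft_zero (g : EuclideanSpace ℝ (Fin 3) → ℂ) : ft g 0 = ∫ x, g x := by
  simp [ft]

theorem exists_schwartzMap_coe_eq_ft (f : SchwartzMap (EuclideanSpace ℝ (Fin 3)) ℝ) :
    ∃ g : SchwartzMap (EuclideanSpace ℝ (Fin 3)) ℂ, ⇑g = ft (fun x ↦ (f x : ℂ)) := by
  let c : ℝˣ := Units.mk0 (-(2 * π)⁻¹) (by simp [pi_ne_zero])
  refine ⟨SchwartzMap.compCLMOfContinuousLinearEquiv ℂ (ContinuousLinearEquiv.smulLeft c)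
    (𝓕 (SchwartzMap.postcompCLM Complex.ofRealCLM f)), ?_⟩
  ext k
  rw [ft_eq_fourier]
  rfl

/-- A real Schwartz function on `ℝ³` has finite homogeneous Sobolev norm of order `-3/2`,
i.e. `∫ |k|⁻³ |f̂(k)|² dk < ∞`, if and only if it has vanishing spatial average. -/
theorem stmt2 (f : SchwartzMap (EuclideanSpace ℝ (Fin 3)) ℝ) :
    (∫⁻ k : EuclideanSpace ℝ (Fin 3),
        ENNReal.ofReal (‖k‖ ^ (-3 : ℝ) * ‖ft (fun x => (f x : ℂ)) k‖ ^ 2) < ⊤) ↔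
      (∫ x, f x) = 0 := by
  obtain ⟨g, hg⟩ := exists_schwartzMap_coe_eq_ft f
  have hdim : (-3 : ℝ) = -(finrank ℝ (EuclideanSpace ℝ (Fin 3)) : ℝ) := by simp
  rw [← hg, hdim, lt_top_iff_ne_top,
    lintegral_ofReal_ne_top_iff_integrable (g.aestronglyMeasurable_norm_rpow_mul_norm_sq _)
      (.of_forall fun k ↦ by positivity),
    g.integrable_norm_rpow_neg_finrank_mul_norm_sq_iff, hg, ft_zero, integral_complex_ofReal,
    Complex.ofReal_eq_zero]
end

section
/- Let R > 0 and let f : ℝ³ → ℝ be the indicator function of the closed ball of radius R centered at the origin, with Fourier transform f̂(k) = ∫_{ℝ³} f(x) exp(i k·x) dx. Then ∫_{ℝ³} |k|^{-1} |f̂(k)|² dk < ∞ while ∫_{ℝ³} |k| |f̂(k)|² dk = ∞; that is, the top-hat function belongs to the homogeneous Sobolev space Ḣ^{-1/2}(ℝ³) but not to Ḣ^{1/2}(ℝ³). -/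
/-!
Rotation invariance reduces `f̂(k)` to `k = |k| e₀`, and slicing the ball perpendicular to `e₀`
gives `f̂(k) = ∫_{-R}^{R} π (R² - t²) e^{i|k|t} dt = 4π (sin (R|k|) - R|k| cos (R|k|)) / |k|³`.
In polar coordinates the two integrals become `∫_0^∞ r f̂(r)² dr` and `∫_0^∞ r³ f̂(r)² dr`.
The first converges because `|f̂| ≤ vol (B_R)` near `0` and `f̂ = O(r⁻²)` at infinity.
The second diverges because `r³ f̂(r)² ≥ 8π²R² cos² (Rr) / r - 16π² / r³`, and `cos² (Rr) / r`
is not integrable at infinity: adding to it its translate by `π / (2R)` gives a function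
bounded below by `1 / (r + π / (2R))`.
-/

open MeasureTheory Real

open Set Metric

-- The antiderivative comes from integrating by parts twice.
open Complex in
theorem hasDerivAt_exp_mul_quadratic (R κ t : ℝ) (hκ : κ ≠ 0) :
    HasDerivAt (fun s : ℝ => exp (I * κ * s) *
        (-I * (R ^ 2 - (s : ℂ) ^ 2) / κ - 2 * s / κ ^ 2 - 2 * I / κ ^ 3))
      (((R ^ 2 - t ^ 2 : ℝ) : ℂ) * exp (I * κ * t)) t := by
  have hκ' : (κ : ℂ) ≠ 0 := ofReal_ne_zero.2 hκ
  have hs : HasDerivAt (fun s : ℝ => (s : ℂ)) 1 t := (hasDerivAt_id t).ofReal_comp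
  have hexp : HasDerivAt (fun s : ℝ => exp (I * κ * s)) (exp (I * κ * t) * (I * κ * 1)) t :=
    (hs.const_mul (I * κ)).cexp
  have hpoly : HasDerivAt
      (fun s : ℝ => -I * (R ^ 2 - (s : ℂ) ^ 2) / κ - 2 * s / κ ^ 2 - 2 * I / κ ^ 3)
      (-I * (0 - 2 * (t : ℂ) ^ 1 * 1) / κ - 2 * 1 / κ ^ 2) t :=
    ((((hasDerivAt_const t _).sub (hs.pow 2)).const_mul (-I)).div_const _ |>.sub
      ((hs.const_mul 2).div_const _)).sub_const _
  refine (hexp.fun_mul hpoly).congr_deriv ?_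
  field_simp
  push_cast
  ring_nf
  rw [I_sq]
  ring

open Complex in
theorem integral_sq_sub_sq_mul_exp (R κ : ℝ) (hκ : κ ≠ 0) :
    ∫ t in -R..R, ((R ^ 2 - t ^ 2 : ℝ) : ℂ) * exp (I * κ * t) =
      ((4 * (Real.sin (R * κ) - R * κ * Real.cos (R * κ)) / κ ^ 3 : ℝ) : ℂ) := by
  rw [intervalIntegral.integral_eq_sub_of_hasDerivAt
    (fun t _ => hasDerivAt_exp_mul_quadratic R κ t hκ)
    (Continuous.intervalIntegrable (by fun_prop) _ _)]
  have hκ' : (κ : ℂ) ≠ 0 := ofReal_ne_zero.2 hκ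
  simp only [ofReal_neg]
  rw [show I * κ * R = (R * κ : ℝ) * I by push_cast; ring,
    show I * κ * -R = (-(R * κ) : ℝ) * I by push_cast; ring,
    exp_mul_I, exp_mul_I, ← ofReal_cos, ← ofReal_sin, ← ofReal_cos, ← ofReal_sin,
    Real.cos_neg, Real.sin_neg]
  push_cast
  field_simp
  ring_nf
  rw [I_sq]
  ring

theorem ofLp_preimage_sum_sq_le {ι : Type*} [Fintype ι] {r : ℝ} (hr : 0 ≤ r) :
    WithLp.ofLp ⁻¹' {y : ι → ℝ | ∑ i, y i ^ 2 ≤ r ^ 2} =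
      closedBall (0 : EuclideanSpace ℝ ι) r := by
  ext x
  simp only [mem_preimage, mem_ofPred_eq, mem_closedBall_zero_iff]
  rw [← sq_le_sq₀ (norm_nonneg x) hr, EuclideanSpace.norm_sq_eq]
  simp [Real.norm_eq_abs, sq_abs]

theorem volume_sum_sq_le (s : ℝ) :
    volume {y : Fin 2 → ℝ | ∑ i, y i ^ 2 ≤ s} = ENNReal.ofReal (π * s) := by
  rcases lt_or_ge s 0 with hs | hs
  · have hempty : {y : Fin 2 → ℝ | ∑ i, y i ^ 2 ≤ s} = ∅ :=
      eq_empty_of_forall_notMem fun y hy => (hs.trans_le (by positivity)).not_ge hy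
    rw [hempty, measure_empty,
      ENNReal.ofReal_of_nonpos (mul_nonpos_of_nonneg_of_nonpos pi_pos.le hs.le)]
  have hmeas : MeasurableSet {y : Fin 2 → ℝ | ∑ i, y i ^ 2 ≤ s} :=
    measurableSet_le (by fun_prop) measurable_const
  rw [← (PiLp.volume_preserving_ofLp (Fin 2)).measure_preimage hmeas.nullMeasurableSet,
    ← sq_sqrt hs, ofLp_preimage_sum_sq_le (sqrt_nonneg s),
    EuclideanSpace.volume_closedBall_fin_two,
    ← ENNReal.ofReal_pow (sqrt_nonneg s), ← ENNReal.ofReal_mul (by positivity), mul_comm]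

noncomputable def splitFirst : ℝ × (Fin 2 → ℝ) ≃ᵐ EuclideanSpace ℝ (Fin 3) :=
  (MeasurableEquiv.piFinSuccAbove (fun _ => ℝ) 0).symm.trans (MeasurableEquiv.toLp 2 _)

theorem measurePreserving_splitFirst : MeasurePreserving splitFirst :=
  (volume_preserving_piFinSuccAbove (fun _ => ℝ) 0).symm.trans (PiLp.volume_preserving_toLp _)

theorem splitFirst_apply_zero (p : ℝ × (Fin 2 → ℝ)) : splitFirst p 0 = p.1 := by
  simp [splitFirst]

theorem norm_splitFirst_sq (p : ℝ × (Fin 2 → ℝ)) :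
    ‖splitFirst p‖ ^ 2 = p.1 ^ 2 + ∑ i, p.2 i ^ 2 := by
  rw [EuclideanSpace.norm_sq_eq, Fin.sum_univ_succAbove _ 0]
  simp [splitFirst, Real.norm_eq_abs, sq_abs]

theorem integral_indicator_closedBall_comp_apply_zero {R : ℝ} (hR : 0 ≤ R) {φ : ℝ → ℂ}
    (hφ : Continuous φ) :
    ∫ x : EuclideanSpace ℝ (Fin 3), (closedBall 0 R).indicator (fun x => φ (x 0)) x =
      ∫ t in -R..R, ((π * (R ^ 2 - t ^ 2) : ℝ) : ℂ) * φ t := by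
  set F := (closedBall (0 : EuclideanSpace ℝ (Fin 3)) R).indicator fun x => φ (x 0)
  have hF : Integrable F := (integrable_indicator_iff measurableSet_closedBall).2
    ((by fun_prop : Continuous fun x : EuclideanSpace ℝ (Fin 3) => φ (x 0)).continuousOn
      |>.integrableOn_compact (isCompact_closedBall 0 R))
  have hFsplit : Integrable (F ∘ splitFirst) :=
    (measurePreserving_splitFirst.integrable_comp_emb splitFirst.measurableEmbedding).2 hF
  have hslice (t : ℝ) : (fun y => F (splitFirst (t, y))) =
      {y : Fin 2 → ℝ | ∑ i, y i ^ 2 ≤ R ^ 2 - t ^ 2}.indicator fun _ => φ t := by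
    ext y
    classical
    simp only [F, indicator_apply, mem_closedBall_zero_iff, splitFirst_apply_zero, mem_ofPred_eq]
    refine if_congr ?_ rfl rfl
    rw [← sq_le_sq₀ (norm_nonneg _) hR, norm_splitFirst_sq, ← le_sub_iff_add_le']
  have hfiber (t : ℝ) : ∫ y, F (splitFirst (t, y)) =
      (Icc (-R) R).indicator (fun t => ((π * (R ^ 2 - t ^ 2) : ℝ) : ℂ) * φ t) t := by
    rw [hslice, integral_indicator_const _ (measurableSet_le (by fun_prop) measurable_const),
      measureReal_def, volume_sum_sq_le, indicator_apply, Complex.real_smul]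
    split_ifs with ht
    · rw [ENNReal.toReal_ofReal (mul_nonneg pi_pos.le (sub_nonneg.2 (sq_le_sq' ht.1 ht.2)))]
    · rw [ENNReal.ofReal_of_nonpos, ENNReal.toReal_zero, Complex.ofReal_zero, zero_mul]
      refine mul_nonpos_of_nonneg_of_nonpos pi_pos.le (sub_nonpos.2 ?_)
      simp only [mem_Icc, not_and_or, not_le] at ht
      rcases ht with h | h <;> nlinarith
  rw [← measurePreserving_splitFirst.integral_comp' F]
  rw [Measure.volume_eq_prod] at hFsplit ⊢
  rw [integral_prod (fun p => F (splitFirst p)) hFsplit]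
  simp_rw [hfiber]
  rw [integral_indicator measurableSet_Icc, integral_Icc_eq_integral_Ioc,
    intervalIntegral.integral_of_le (by linarith)]

theorem ft_comp_linearIsometryEquiv (f : EuclideanSpace ℝ (Fin 3) → ℂ)
    (g : EuclideanSpace ℝ (Fin 3) ≃ₗᵢ[ℝ] EuclideanSpace ℝ (Fin 3))
    (k : EuclideanSpace ℝ (Fin 3)) :
    ft (f ∘ g) k = ft f (g k) := by
  unfold ft
  conv_rhs => rw [← g.measurePreserving.integral_comp g.toHomeomorph.measurableEmbedding]
  simp [LinearIsometryEquiv.inner_map_map]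

theorem ft_eq_of_norm_eq {f : EuclideanSpace ℝ (Fin 3) → ℂ}
    (hf : ∀ x y, ‖x‖ = ‖y‖ → f x = f y) {k k' : EuclideanSpace ℝ (Fin 3)} (hk : ‖k‖ = ‖k'‖) :
    ft f k = ft f k' := by
  set g := Submodule.reflection (ℝ ∙ (k - k'))ᗮ
  calc ft f k = ft (f ∘ g) k := by
        rw [show f ∘ g = f from funext fun x => hf _ _ (g.norm_map x)]
    _ = ft f k' := by rw [ft_comp_linearIsometryEquiv, Submodule.reflection_sub hk]

noncomputable def topHatFourier (R r : ℝ) : ℝ :=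
  4 * π * (sin (R * r) - R * r * cos (R * r)) / r ^ 3

theorem ft_indicator_closedBall {R : ℝ} (hR : 0 ≤ R) {k : EuclideanSpace ℝ (Fin 3)}
    (hk : k ≠ 0) :
    ft (fun x => (((closedBall 0 R).indicator (fun _ => (1 : ℝ)) x : ℝ) : ℂ)) k =
      topHatFourier R ‖k‖ := by
  classical
  have hκ : ‖k‖ ≠ 0 := norm_ne_zero_iff.2 hk
  have hradial : ∀ x y : EuclideanSpace ℝ (Fin 3), ‖x‖ = ‖y‖ →
      (((closedBall 0 R).indicator (fun _ => (1 : ℝ)) x : ℝ) : ℂ) =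
        (((closedBall 0 R).indicator (fun _ => (1 : ℝ)) y : ℝ) : ℂ) := fun x y h => by
    simp only [indicator_apply, mem_closedBall_zero_iff, h]
  rw [ft_eq_of_norm_eq hradial (k' := ‖k‖ • EuclideanSpace.single 0 1)
    (by simp [norm_smul])]
  have hintegrand : (fun x : EuclideanSpace ℝ (Fin 3) =>
      (((closedBall 0 R).indicator (fun _ => (1 : ℝ)) x : ℝ) : ℂ) *
        Complex.exp (Complex.I * ((inner ℝ (‖k‖ • EuclideanSpace.single 0 1) x : ℝ) : ℂ))) =
      (closedBall 0 R).indicator fun x => Complex.exp (Complex.I * ‖k‖ * x 0) := by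
    ext x
    simp only [indicator_apply, real_inner_smul_left, EuclideanSpace.inner_single_left]
    split_ifs <;> simp [mul_assoc]
  rw [ft, hintegrand, integral_indicator_closedBall_comp_apply_zero hR
    (φ := fun t => Complex.exp (Complex.I * ‖k‖ * t)) (by fun_prop)]
  simp only [Complex.ofReal_mul, mul_assoc (π : ℂ)]
  rw [intervalIntegral.integral_const_mul, integral_sq_sub_sq_mul_exp R ‖k‖ hκ, topHatFourier]
  push_cast
  ring

theorem norm_ft_le (f : EuclideanSpace ℝ (Fin 3) → ℂ) (k : EuclideanSpace ℝ (Fin 3)) :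
    ‖ft f k‖ ≤ ∫ x, ‖f x‖ := by
  refine (norm_integral_le_integral_norm _).trans_eq ?_
  simp [Complex.norm_exp_I_mul_ofReal]

theorem abs_topHatFourier_le {R r : ℝ} (hR : 0 ≤ R) (hr : 0 < r) :
    |topHatFourier R r| ≤ volume.real (closedBall (0 : EuclideanSpace ℝ (Fin 3)) R) := by
  obtain ⟨k, rfl⟩ := exists_norm_eq (EuclideanSpace ℝ (Fin 3)) hr.le
  rw [← Real.norm_eq_abs, ← Complex.norm_real, ← ft_indicator_closedBall hR (norm_pos_iff.1 hr)]
  refine (norm_ft_le _ k).trans_eq ?_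
  simp only [Complex.norm_real, norm_indicator_eq_indicator_norm, norm_one]
  exact integral_indicator_one measurableSet_closedBall

theorem mul_norm_ft_indicator_closedBall_sq {R : ℝ} (hR : 0 ≤ R) {c : ℝ → ℝ} (hc : c 0 = 0)
    (k : EuclideanSpace ℝ (Fin 3)) :
    c ‖k‖ * ‖ft (fun x => (((closedBall 0 R).indicator (fun _ => (1 : ℝ)) x : ℝ) : ℂ)) k‖ ^ 2 =
      c ‖k‖ * topHatFourier R ‖k‖ ^ 2 := by
  rcases eq_or_ne k 0 with rfl | hk
  · simp [hc]
  · rw [ft_indicator_closedBall hR hk, Complex.norm_real, Real.norm_eq_abs, sq_abs]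

theorem lintegral_ofReal_comp_norm_ne_top_iff {E : Type*} [NormedAddCommGroup E]
    [NormedSpace ℝ E] [FiniteDimensional ℝ E] [MeasurableSpace E] [BorelSpace E] [Nontrivial E]
    (μ : Measure E) [μ.IsAddHaarMeasure] {h : ℝ → ℝ} (hm : Measurable h)
    (h_nonneg : ∀ r, 0 ≤ r → 0 ≤ h r) :
    ∫⁻ x, ENNReal.ofReal (h ‖x‖) ∂μ ≠ ⊤ ↔
      IntegrableOn (fun r : ℝ => r ^ (Module.finrank ℝ E - 1) * h r) (Ioi 0) := by
  rw [lintegral_ofReal_ne_top_iff_integrable (f := fun x => h ‖x‖)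
    (hm.comp measurable_norm).aestronglyMeasurable
    (ae_of_all _ fun x => h_nonneg _ (norm_nonneg x))]
  exact integrable_fun_norm_addHaar μ

theorem not_integrableOn_Ioi_cos_sq_div {ω a : ℝ} (hω : 0 < ω) (ha : 0 < a) :
    ¬ IntegrableOn (fun y => cos (ω * y) ^ 2 / y) (Ioi a) := by
  intro hcos
  set c := π / (2 * ω) with hc
  have hc0 : 0 < c := by positivity
  have hshift : IntegrableOn (fun y => sin (ω * y) ^ 2 / (y + c)) (Ioi a) := by
    have := ((measurePreserving_add_right volume c).integrableOn_comp_preimage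
      (measurableEmbedding_addRight c)).2 hcos
    rw [preimage_add_const_Ioi] at this
    refine (this.mono_set (Ioi_subset_Ioi (by linarith))).congr_fun (fun y _ => ?_)
      measurableSet_Ioi
    simp only [Function.comp_apply, hc]
    rw [show ω * (y + π / (2 * ω)) = ω * y + π / 2 by field_simp, cos_add_pi_div_two, neg_sq]
  have hsum : IntegrableOn (fun y => cos (ω * y) ^ 2 / y + sin (ω * y) ^ 2 / (y + c))
      (Ioi a) := hcos.add hshift
  apply not_integrableOn_Ioi_inv (a := max a c)
  refine ((hsum.mono_set (Ioi_subset_Ioi (le_max_left a c))).const_mul 2).mono'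
    measurable_inv.aestronglyMeasurable ?_
  filter_upwards [ae_restrict_mem measurableSet_Ioi] with y hy
  have hay : a < y := (le_max_left a c).trans_lt hy
  have hcy : c < y := (le_max_right a c).trans_lt hy
  have hy0 : 0 < y := ha.trans hay
  rw [Real.norm_of_nonneg (inv_nonneg.2 hy0.le)]
  calc y⁻¹ ≤ 2 * (1 / (y + c)) := by
        rw [inv_eq_one_div, mul_one_div, div_le_div_iff₀ hy0 (by linarith)]; linarith
    _ = 2 * ((cos (ω * y) ^ 2 + sin (ω * y) ^ 2) / (y + c)) := by rw [cos_sq_add_sin_sq]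
    _ ≤ 2 * (cos (ω * y) ^ 2 / y + sin (ω * y) ^ 2 / (y + c)) := by
        rw [add_div]
        gcongr
        linarith

theorem measurable_topHatFourier (R : ℝ) : Measurable (topHatFourier R) := by
  unfold topHatFourier; fun_prop

theorem abs_topHatFourier_le_of_one_le {R r : ℝ} (hR : 0 ≤ R) (hr : 1 ≤ r) :
    |topHatFourier R r| ≤ 4 * π * (1 + R) / r ^ 2 := by
  have hr0 : 0 < r := one_pos.trans_le hr
  have hosc : |sin (R * r) - R * r * cos (R * r)| ≤ r * (1 + R) := by
    calc |sin (R * r) - R * r * cos (R * r)| ≤ |sin (R * r)| + |R * r| * |cos (R * r)| := by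
          rw [← abs_mul]; exact abs_sub _ _
      _ ≤ 1 + R * r * 1 := by
          rw [abs_of_nonneg (mul_nonneg hR hr0.le)]
          gcongr
          exacts [abs_sin_le_one _, abs_cos_le_one _]
      _ ≤ r * (1 + R) := by nlinarith
  rw [topHatFourier, abs_div, abs_mul, abs_of_pos (by positivity : (0 : ℝ) < 4 * π),
    abs_of_pos (by positivity : 0 < r ^ 3), div_le_div_iff₀ (by positivity) (by positivity)]
  calc 4 * π * |sin (R * r) - R * r * cos (R * r)| * r ^ 2
      ≤ 4 * π * (r * (1 + R)) * r ^ 2 := by gcongr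
    _ = 4 * π * (1 + R) * r ^ 3 := by ring

theorem sub_le_pow_mul_topHatFourier_sq (R : ℝ) {r : ℝ} (hr : 0 < r) :
    8 * π ^ 2 * R ^ 2 * (cos (R * r) ^ 2 / r) - 16 * π ^ 2 * r ^ (-3 : ℝ) ≤
      r ^ 3 * topHatFourier R r ^ 2 := by
  -- `(a - b)² ≥ b² / 2 - a²`, applied with `a = sin (R r)` and `b = R r cos (R r)`
  have hsq : (R * r * cos (R * r)) ^ 2 / 2 - 1 ≤ (sin (R * r) - R * r * cos (R * r)) ^ 2 := by
    nlinarith [sq_nonneg (2 * sin (R * r) - R * r * cos (R * r)), sin_sq_le_one (R * r)]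
  have hr3 : r ^ (-3 : ℝ) = 1 / r ^ 3 := by
    rw [rpow_neg hr.le, one_div]; norm_cast
  rw [topHatFourier, hr3]
  calc 8 * π ^ 2 * R ^ 2 * (cos (R * r) ^ 2 / r) - 16 * π ^ 2 * (1 / r ^ 3)
      = 16 * π ^ 2 * ((R * r * cos (R * r)) ^ 2 / 2 - 1) / r ^ 3 := by
        field_simp; ring
    _ ≤ 16 * π ^ 2 * (sin (R * r) - R * r * cos (R * r)) ^ 2 / r ^ 3 := by gcongr
    _ = r ^ 3 * (4 * π * (sin (R * r) - R * r * cos (R * r)) / r ^ 3) ^ 2 := by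
        field_simp; ring

theorem integrableOn_mul_topHatFourier_sq {R : ℝ} (hR : 0 ≤ R) :
    IntegrableOn (fun r : ℝ => r * topHatFourier R r ^ 2) (Ioi 0) := by
  have hmeas : Measurable fun r : ℝ => r * topHatFourier R r ^ 2 := by
    have := measurable_topHatFourier R; fun_prop
  set V := volume.real (closedBall (0 : EuclideanSpace ℝ (Fin 3)) R)
  rw [← Ioc_union_Ioi_eq_Ioi zero_le_one, integrableOn_union]
  constructor
  · refine Measure.integrableOn_of_bounded (M := V ^ 2) measure_Ioc_lt_top.ne
      hmeas.aestronglyMeasurable ?_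
    filter_upwards [ae_restrict_mem measurableSet_Ioc] with r ⟨hr0, hr1⟩
    rw [Real.norm_of_nonneg (by positivity)]
    calc r * topHatFourier R r ^ 2 ≤ 1 * V ^ 2 :=
          mul_le_mul hr1 (sq_le_sq.2 ((abs_topHatFourier_le hR hr0).trans (le_abs_self V)))
            (sq_nonneg _) zero_le_one
      _ = V ^ 2 := one_mul _
  · refine ((integrableOn_Ioi_rpow_of_lt (by norm_num : (-3 : ℝ) < -1) one_pos).const_mul
      (16 * π ^ 2 * (1 + R) ^ 2)).mono' hmeas.aestronglyMeasurable ?_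
    filter_upwards [ae_restrict_mem measurableSet_Ioi] with r (hr : 1 < r)
    have hr0 : 0 < r := one_pos.trans hr
    have hg := abs_topHatFourier_le_of_one_le hR hr.le
    rw [Real.norm_of_nonneg (by positivity), rpow_neg hr0.le]
    calc r * topHatFourier R r ^ 2 = r * |topHatFourier R r| ^ 2 := by rw [sq_abs]
      _ ≤ r * (4 * π * (1 + R) / r ^ 2) ^ 2 := by gcongr
      _ = 16 * π ^ 2 * (1 + R) ^ 2 * (r ^ (3 : ℝ))⁻¹ := by
        norm_cast; field_simp; ring

theorem not_integrableOn_pow_three_mul_topHatFourier_sq {R : ℝ} (hR : 0 < R) :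
    ¬ IntegrableOn (fun r : ℝ => r ^ 3 * topHatFourier R r ^ 2) (Ioi 0) := by
  intro h
  apply not_integrableOn_Ioi_cos_sq_div hR one_pos
  have hdom : IntegrableOn (fun r : ℝ => (8 * π ^ 2 * R ^ 2)⁻¹ *
      (r ^ 3 * topHatFourier R r ^ 2 + 16 * π ^ 2 * r ^ (-3 : ℝ))) (Ioi 1) :=
    ((h.mono_set (Ioi_subset_Ioi zero_le_one)).add
      ((integrableOn_Ioi_rpow_of_lt (by norm_num) one_pos).const_mul _)).const_mul _
  refine hdom.mono' (Measurable.aestronglyMeasurable (by fun_prop)) ?_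
  filter_upwards [ae_restrict_mem measurableSet_Ioi] with r (hr : 1 < r)
  have hr0 : 0 < r := one_pos.trans hr
  rw [Real.norm_of_nonneg (by positivity), inv_mul_eq_div, le_div_iff₀ (by positivity)]
  linarith [sub_le_pow_mul_topHatFourier_sq R hr0]

/-- The top-hat function (indicator of the closed ball of radius `R > 0`) belongs to the
homogeneous Sobolev space `Ḣ^{-1/2}(ℝ³)` — i.e. `∫ |k|⁻¹ |f̂(k)|² dk < ∞` — but not to
`Ḣ^{1/2}(ℝ³)` — i.e. `∫ |k| |f̂(k)|² dk = ∞`. -/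
theorem stmt3 (R : ℝ) (hR : 0 < R) (f : EuclideanSpace ℝ (Fin 3) → ℝ)
    (hf : f = (Metric.closedBall (0 : EuclideanSpace ℝ (Fin 3)) R).indicator fun _ => 1) :
    (∫⁻ k : EuclideanSpace ℝ (Fin 3),
        ENNReal.ofReal (‖k‖ ^ (-1 : ℝ) * ‖ft (fun x => (f x : ℂ)) k‖ ^ 2) < ⊤) ∧
    (∫⁻ k : EuclideanSpace ℝ (Fin 3),
        ENNReal.ofReal (‖k‖ * ‖ft (fun x => (f x : ℂ)) k‖ ^ 2) = ⊤) := by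
  subst hf
  have hdim : Module.finrank ℝ (EuclideanSpace ℝ (Fin 3)) - 1 = 2 := by simp
  have hmeas := measurable_topHatFourier R
  simp_rw [mul_norm_ft_indicator_closedBall_sq hR.le (c := (· ^ (-1 : ℝ)))
      (zero_rpow (by norm_num)),
    mul_norm_ft_indicator_closedBall_sq hR.le (c := fun r => r) rfl]
  constructor
  · rw [lt_top_iff_ne_top, lintegral_ofReal_comp_norm_ne_top_iff volume
      (h := fun r => r ^ (-1 : ℝ) * topHatFourier R r ^ 2) (by fun_prop)
      (fun r hr => by positivity), hdim]
    refine (integrableOn_mul_topHatFourier_sq hR.le).congr_fun (fun r (hr : 0 < r) => ?_)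
      measurableSet_Ioi
    rw [rpow_neg_one]
    field_simp
  · rw [← not_ne_iff, lintegral_ofReal_comp_norm_ne_top_iff volume
      (h := fun r => r * topHatFourier R r ^ 2) (by fun_prop)
      (fun r hr => by positivity), hdim]
    exact fun h => not_integrableOn_pow_three_mul_topHatFourier_sq hR
      (h.congr_fun (fun r _ => by ring) measurableSet_Ioi)
end

section
/- Let 0 < a < 1 and let F : ℝ → ℝ be bounded, continuous on [0,∞), and measurable. Then lim_{r→∞} r^a · ∫₀^∞ k^{a-1} F(k) · (sin(k r)/(k r)) dk = -F(0) · Γ(a-1) · cos(π a / 2). (Note Γ(a-1) < 0 for 0 < a < 1, so the limit is positive when F(0) > 0.) -/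
/-!
Substituting `u = k r` turns `r ^ a ∫ k ^ (a - 1) F(k) sinc(k r) dk` into
`∫ u ^ (a - 2) sin u F(u / r) du`; since `u ^ (a - 2) sin u` is absolutely integrable for
`0 < a < 1`, dominated convergence gives the limit `F(0) ∫ u ^ (a - 2) sin u du`.
That integral is evaluated by Fubini twice: writing
`Γ(2 - a) u ^ (a - 2) = ∫ t ^ (1 - a) e^(-u t) dt` and using `∫ e^(-t u) sin u du = 1 / (1 + t²)`
turns `Γ(2 - a) ∫ u ^ (a - 2) sin u du` into `∫ t ^ (1 - a) / (1 + t²) dt`; writing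
`1 / (1 + t²) = ∫ e^(-(1 + t²) x) dx` reduces the latter to `Γ(a/2) Γ(1 - a/2) / 2`,
and the reflection formula turns the result into `-Γ(a - 1) cos(πa/2)`.
-/

open MeasureTheory Real Filter Set

lemma integrableOn_Ioi_of_norm_le_rpow {f : ℝ → ℝ} {p q : ℝ}
    (hf : AEStronglyMeasurable f (volume.restrict (Ioi 0))) (hp : -1 < p) (hq : q < -1)
    (h₀ : ∀ x ∈ Ioc (0 : ℝ) 1, ‖f x‖ ≤ x ^ p) (h₁ : ∀ x ∈ Ioi (1 : ℝ), ‖f x‖ ≤ x ^ q) :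
    IntegrableOn f (Ioi 0) := by
  rw [← Ioc_union_Ioi_eq_Ioi zero_le_one]
  refine IntegrableOn.union ?_ ?_
  · have hpow : IntegrableOn (fun x : ℝ => x ^ p) (Ioc 0 1) :=
      (intervalIntegral.intervalIntegrable_rpow' (a := 0) (b := 1) hp).1
    exact hpow.mono' (hf.mono_set Ioc_subset_Ioi_self)
      ((ae_restrict_iff' measurableSet_Ioc).mpr (.of_forall h₀))
  · exact (integrableOn_Ioi_rpow_of_lt hq one_pos).mono'
      (hf.mono_set (Ioi_subset_Ioi zero_le_one))
      ((ae_restrict_iff' measurableSet_Ioi).mpr (.of_forall h₁))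

lemma integral_exp_neg_mul_mul_sin {t : ℝ} (ht : 0 < t) :
    ∫ u in Ioi (0 : ℝ), exp (-(t * u)) * sin u = 1 / (1 + t ^ 2) := by
  have hre : (-t + Complex.I).re < 0 := by simpa using ht
  have hpoint : ∀ u : ℝ, exp (-(t * u)) * sin u = (Complex.exp ((-t + Complex.I) * u)).im := by
    intro u
    simp [Complex.exp_im]
  have him := integral_im (integrableOn_exp_mul_complex_Ioi hre 0)
  simp only [RCLike.im_to_complex] at him
  simp_rw [hpoint, him, integral_exp_mul_complex_Ioi hre]
  simp [Complex.div_im, Complex.normSq]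
  ring

section

variable {a : ℝ}

lemma integrableOn_rpow_mul_sin (ha : 0 < a) (ha' : a < 1) :
    IntegrableOn (fun u : ℝ => u ^ (a - 2) * sin u) (Ioi 0) := by
  refine integrableOn_Ioi_of_norm_le_rpow (p := a - 1) (q := a - 2)
    (by fun_prop) (by linarith) (by linarith) (fun u hu => ?_) (fun u hu => ?_)
  · have hu₀ : 0 < u := hu.1
    calc ‖u ^ (a - 2) * sin u‖ = u ^ (a - 2) * |sin u| := by
          rw [norm_mul, norm_of_nonneg (by positivity), norm_eq_abs]
      _ ≤ u ^ (a - 2) * u := by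
          gcongr; simpa [abs_of_pos hu₀] using abs_sin_le_abs (x := u)
      _ = u ^ (a - 1) := by rw [← rpow_add_one hu₀.ne']; ring_nf
  · have hu₀ : 0 < u := one_pos.trans hu
    calc ‖u ^ (a - 2) * sin u‖ = u ^ (a - 2) * |sin u| := by
          rw [norm_mul, norm_of_nonneg (by positivity), norm_eq_abs]
      _ ≤ u ^ (a - 2) * 1 := by gcongr; exact abs_sin_le_one u
      _ = u ^ (a - 2) := mul_one _

lemma integrableOn_rpow_div_one_add_sq (ha : 0 < a) (ha' : a < 2) :
    IntegrableOn (fun t : ℝ => t ^ (1 - a) / (1 + t ^ 2)) (Ioi 0) := by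
  refine integrableOn_Ioi_of_norm_le_rpow (p := 1 - a) (q := -1 - a)
    (by fun_prop : Measurable fun t : ℝ => t ^ (1 - a) / (1 + t ^ 2)).aestronglyMeasurable
    (by linarith) (by linarith) (fun t ht => ?_) (fun t ht => ?_)
  · have ht₀ : 0 < t := ht.1
    rw [norm_of_nonneg (by positivity)]
    exact div_le_self (by positivity) (by nlinarith)
  · have ht₀ : 0 < t := one_pos.trans ht
    rw [norm_of_nonneg (by positivity), div_le_iff₀ (by positivity)]
    calc t ^ (1 - a) = t ^ (-1 - a) * t ^ 2 := by
          rw [← rpow_natCast, ← rpow_add ht₀]; ring_nf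
      _ ≤ t ^ (-1 - a) * (1 + t ^ 2) := by gcongr; linarith

lemma Gamma_mul_integral_rpow_mul_sin (ha : 0 < a) (ha' : a < 1) :
    Gamma (2 - a) * ∫ u in Ioi (0 : ℝ), u ^ (a - 2) * sin u =
      ∫ t in Ioi (0 : ℝ), t ^ (1 - a) / (1 + t ^ 2) := by
  have hpow {u : ℝ} (hu : 0 < u) :
      ∫ t in Ioi (0 : ℝ), t ^ (1 - a) * exp (-(u * t)) = Gamma (2 - a) * u ^ (a - 2) := by
    have := integral_rpow_mul_exp_neg_mul_Ioi (a := 2 - a) (by linarith) hu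
    rw [show 2 - a - 1 = 1 - a by ring] at this
    rw [this, one_div, inv_rpow hu.le, ← rpow_neg hu.le, neg_sub, mul_comm]
  set f : ℝ → ℝ → ℝ := fun u t => sin u * (t ^ (1 - a) * exp (-(u * t)))
  have hf : Integrable (Function.uncurry f)
      ((volume.restrict (Ioi 0)).prod (volume.restrict (Ioi 0))) := by
    refine (integrable_prod_iff ?_).mpr ⟨?_, ?_⟩
    · exact (by fun_prop : Measurable (Function.uncurry f)).aestronglyMeasurable
    · filter_upwards [ae_restrict_mem measurableSet_Ioi] with u hu
      have hpos : 0 < Gamma (2 - a) * u ^ (a - 2) :=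
        mul_pos (Gamma_pos_of_pos (by linarith)) (rpow_pos_of_pos hu _)
      exact (Integrable.of_integral_ne_zero (by rw [hpow hu]; exact hpos.ne')).const_mul (sin u)
    · refine ((integrableOn_rpow_mul_sin ha ha').norm.const_mul (Gamma (2 - a))).congr ?_
      filter_upwards [ae_restrict_mem measurableSet_Ioi] with u (hu : 0 < u)
      calc Gamma (2 - a) * ‖u ^ (a - 2) * sin u‖
          = |sin u| * ∫ t in Ioi (0 : ℝ), t ^ (1 - a) * exp (-(u * t)) := by
            rw [hpow hu, norm_mul, norm_of_nonneg (rpow_nonneg hu.le _), norm_eq_abs]; ring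
        _ = _ := by
            rw [← integral_const_mul]
            refine setIntegral_congr_fun measurableSet_Ioi fun t (ht : 0 < t) => ?_
            rw [Function.uncurry_apply_pair, norm_mul, norm_eq_abs,
              norm_of_nonneg (by positivity)]
  calc Gamma (2 - a) * ∫ u in Ioi (0 : ℝ), u ^ (a - 2) * sin u
      = ∫ u in Ioi (0 : ℝ), ∫ t in Ioi (0 : ℝ), f u t := by
        rw [← integral_const_mul]
        refine setIntegral_congr_fun measurableSet_Ioi fun u hu => ?_
        rw [integral_const_mul, hpow hu]
        ring
    _ = ∫ t in Ioi (0 : ℝ), ∫ u in Ioi (0 : ℝ), f u t := integral_integral_swap hf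
    _ = ∫ t in Ioi (0 : ℝ), t ^ (1 - a) / (1 + t ^ 2) := by
        refine setIntegral_congr_fun measurableSet_Ioi fun t ht => ?_
        simp only [f, mul_left_comm (sin _), mul_comm _ t, integral_const_mul, mul_comm (sin _)]
        rw [integral_exp_neg_mul_mul_sin ht, mul_one_div]

lemma integral_rpow_div_one_add_sq (ha : 0 < a) (ha' : a < 2) :
    ∫ t in Ioi (0 : ℝ), t ^ (1 - a) / (1 + t ^ 2) = π / (2 * sin (π * a / 2)) := by
  have hexp (t : ℝ) : ∫ x in Ioi (0 : ℝ), exp (-((1 + t ^ 2) * x)) = 1 / (1 + t ^ 2) := by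
    have := integral_exp_mul_Ioi (a := -(1 + t ^ 2)) (by nlinarith [sq_nonneg t]) 0
    rw [mul_zero, exp_zero, neg_div_neg_eq] at this
    simpa only [neg_mul] using this
  have hgauss {x : ℝ} (hx : 0 < x) :
      ∫ t in Ioi (0 : ℝ), t ^ (1 - a) * exp (-((1 + t ^ 2) * x)) =
        1 / 2 * Gamma ((2 - a) / 2) * (exp (-x) * x ^ (a / 2 - 1)) := by
    have := integral_rpow_mul_exp_neg_mul_rpow two_pos (by linarith : -1 < 1 - a) hx
    rw [show -(1 - a + 1) / 2 = a / 2 - 1 by ring,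
      show (1 - a + 1) / 2 = (2 - a) / 2 by ring] at this
    calc _ = exp (-x) * ∫ t in Ioi (0 : ℝ), t ^ (1 - a) * exp (-x * t ^ (2 : ℝ)) := by
          rw [← integral_const_mul]
          refine integral_congr_ae (.of_forall fun t => ?_)
          simp only [rpow_two, mul_left_comm (exp (-x)), ← exp_add]
          ring_nf
      _ = _ := by rw [this]; ring
  set g : ℝ → ℝ → ℝ := fun t x => t ^ (1 - a) * exp (-((1 + t ^ 2) * x))
  have hg : Integrable (Function.uncurry g)
      ((volume.restrict (Ioi 0)).prod (volume.restrict (Ioi 0))) := by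
    refine (integrable_prod_iff ?_).mpr ⟨?_, ?_⟩
    · exact (by fun_prop : Measurable (Function.uncurry g)).aestronglyMeasurable
    · refine .of_forall fun t => ?_
      exact (Integrable.of_integral_ne_zero (by rw [hexp t]; positivity)).const_mul (t ^ (1 - a))
    · refine (integrableOn_rpow_div_one_add_sq ha ha').congr ?_
      filter_upwards [ae_restrict_mem measurableSet_Ioi] with t (ht : 0 < t)
      rw [div_eq_mul_one_div, ← hexp, ← integral_const_mul]
      refine setIntegral_congr_fun measurableSet_Ioi fun x _ => ?_
      rw [Function.uncurry_apply_pair, norm_of_nonneg (by positivity)]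
  have hrefl := Gamma_mul_Gamma_one_sub (a / 2)
  rw [show 1 - a / 2 = (2 - a) / 2 by ring, show π * (a / 2) = π * a / 2 by ring] at hrefl
  calc ∫ t in Ioi (0 : ℝ), t ^ (1 - a) / (1 + t ^ 2)
      = ∫ t in Ioi (0 : ℝ), ∫ x in Ioi (0 : ℝ), g t x := by
        refine setIntegral_congr_fun measurableSet_Ioi fun t _ => ?_
        rw [integral_const_mul, hexp, mul_one_div]
    _ = ∫ x in Ioi (0 : ℝ), ∫ t in Ioi (0 : ℝ), g t x := integral_integral_swap hg
    _ = 1 / 2 * Gamma ((2 - a) / 2) * ∫ x in Ioi (0 : ℝ), exp (-x) * x ^ (a / 2 - 1) := by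
        rw [← integral_const_mul]
        exact setIntegral_congr_fun measurableSet_Ioi fun x hx => hgauss hx
    _ = π / (2 * sin (π * a / 2)) := by
        rw [← Gamma_eq_integral (by positivity), mul_comm 2, ← div_div, ← hrefl]
        ring

lemma integral_rpow_mul_sin (ha : 0 < a) (ha' : a < 1) :
    ∫ u in Ioi (0 : ℝ), u ^ (a - 2) * sin u = -Gamma (a - 1) * cos (π * a / 2) := by
  have hΓ : Gamma (2 - a) ≠ 0 := (Gamma_pos_of_pos (by linarith)).ne'
  have hsin : sin (π * a / 2) ≠ 0 :=
    (sin_pos_of_pos_of_lt_pi (by positivity) (by nlinarith [pi_pos])).ne'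
  have hcos : cos (π * a / 2) ≠ 0 :=
    (cos_pos_of_mem_Ioo ⟨by nlinarith [pi_pos], by nlinarith [pi_pos]⟩).ne'
  have hrefl :
      Gamma (a - 1) * Gamma (2 - a) = -(π / (2 * sin (π * a / 2) * cos (π * a / 2))) := by
    rw [show 2 - a = 1 - (a - 1) by ring, Gamma_mul_Gamma_one_sub,
      show π * (a - 1) = 2 * (π * a / 2) - π by ring, sin_sub_pi, sin_two_mul, div_neg]
  have hI := Gamma_mul_integral_rpow_mul_sin ha ha'
  rw [integral_rpow_div_one_add_sq ha (by linarith)] at hI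
  apply mul_left_cancel₀ hΓ
  rw [hI, show Gamma (2 - a) * (-Gamma (a - 1) * cos (π * a / 2)) =
    -(Gamma (a - 1) * Gamma (2 - a)) * cos (π * a / 2) by ring, hrefl]
  field_simp

end

lemma rpow_mul_integral_sinc_eq {a r : ℝ} (hr : 0 < r) (F : ℝ → ℝ) :
    r ^ a * ∫ k in Ioi (0 : ℝ), k ^ (a - 1) * F k * (sin (k * r) / (k * r)) =
      ∫ u in Ioi (0 : ℝ), u ^ (a - 2) * sin u * F (u / r) := by
  have hsubst := integral_comp_mul_right_Ioi' (fun u => u ^ (a - 2) * sin u * F (u / r)) 0 hr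
  rw [zero_mul, smul_eq_mul] at hsubst
  rw [← hsubst, ← integral_const_mul, ← integral_const_mul]
  refine setIntegral_congr_fun measurableSet_Ioi fun k (hk : 0 < k) => ?_
  rw [mul_div_cancel_right₀ _ hr.ne', mul_rpow hk.le hr.le, rpow_sub_one hk.ne',
    rpow_sub hk, rpow_sub hr, rpow_two, rpow_two]
  field_simp

lemma tendsto_integral_mul_comp_div_atTop {w F : ℝ → ℝ} (hw : IntegrableOn w (Ioi 0))
    (hbdd : ∃ C, ∀ x, |F x| ≤ C) (hmeas : Measurable F) (hcont : ContinuousWithinAt F (Ici 0) 0) :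
    Tendsto (fun r => ∫ u in Ioi (0 : ℝ), w u * F (u / r)) atTop
      (nhds ((∫ u in Ioi (0 : ℝ), w u) * F 0)) := by
  obtain ⟨C, hC⟩ := hbdd
  rw [← integral_mul_const]
  refine tendsto_integral_filter_of_dominated_convergence (fun u => ‖w u‖ * C) ?_ ?_
    (hw.norm.mul_const C) ?_
  · exact .of_forall fun r => hw.aestronglyMeasurable.mul
      (hmeas.comp (measurable_id.div_const r)).aestronglyMeasurable
  · refine .of_forall fun r => .of_forall fun u => ?_
    rw [norm_mul, norm_eq_abs (F _)]
    exact mul_le_mul_of_nonneg_left (hC _) (norm_nonneg _)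
  · filter_upwards [ae_restrict_mem measurableSet_Ioi] with u (hu : 0 < u)
    refine tendsto_const_nhds.mul (hcont.tendsto.comp ?_)
    refine tendsto_nhdsWithin_iff.mpr ⟨tendsto_const_nhds.div_atTop tendsto_id, ?_⟩
    filter_upwards [eventually_gt_atTop 0] with r hr
    exact (div_pos hu hr).le

/-- Oscillatory-integral asymptotics with the sinc kernel: for `0 < a < 1` and `F` bounded,
measurable and continuous on `[0,∞)`,
`lim_{r→∞} r^a ∫₀^∞ k^{a-1} F(k) (sin(kr)/(kr)) dk = -F(0) Γ(a-1) cos(πa/2)`. -/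
theorem stmt12 (a : ℝ) (ha : 0 < a) (ha' : a < 1) (F : ℝ → ℝ)
    (hbdd : ∃ C, ∀ x, |F x| ≤ C)
    (hcont : ContinuousOn F (Set.Ici 0))
    (hmeas : Measurable F) :
    Tendsto (fun r : ℝ =>
        r ^ a * ∫ k in Set.Ioi (0 : ℝ), k ^ (a - 1) * F k * (Real.sin (k * r) / (k * r)))
      atTop
      (nhds (-(F 0) * Real.Gamma (a - 1) * Real.cos (π * a / 2))) := by
  have hlim := tendsto_integral_mul_comp_div_atTop (integrableOn_rpow_mul_sin ha ha') hbdd hmeas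
    (hcont 0 self_mem_Ici)
  rw [integral_rpow_mul_sin ha ha'] at hlim
  convert hlim.congr' ?_ using 2
  · ring
  · filter_upwards [eventually_gt_atTop 0] with r hr
    exact (rpow_mul_integral_sinc_eq hr F).symm
end

section
/- Let F_A, F_B be 2×2 real symmetric positive-definite matrices, let F_C be a 2×2 real matrix with det F_C < 0, and suppose the 4×4 block matrix F = [[F_A, F_C],[F_Cᵀ, F_B]] is positive semidefinite. Set Δ̃ := det F_A + det F_B - 2 det F_C. Then: (i) Δ̃ > 0; (ii) Δ̃² - 4 det F > 0; and (iii) if F is moreover positive definite, then Δ̃ - √(Δ̃² - 4 det F) > 0. -/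
/-!
Everything rests on Fischer's inequality `det F ≤ det F_A * det F_B`. By the Schur complement,
`det F = det F_A * det S` with `S = F_B - F_Cᴴ F_A⁻¹ F_C`, and `S` and `F_B - S` are positive
semidefinite. The determinant is monotone on positive semidefinite matrices: writing `X = Bᴴ B`,
the matrix determinant lemma gives `det (S + X) = det S * det (1 + B S⁻¹ Bᴴ)`, and the second
factor is a product of numbers `1 + λᵢ ≥ 1`. With `a = det F_A`, `b = det F_B`, `c = det F_C`,
the discriminant bound then reduces to `(a + b - 2c)² - 4ab = (a - b)² - 4c(a + b - c) > 0`.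
-/

open Matrix

open scoped ComplexOrder

namespace Matrix

variable {𝕜 : Type*} [RCLike 𝕜] {n : Type*} [Fintype n] [DecidableEq n]

lemma IsHermitian.det_one_add {A : Matrix n n 𝕜} (hA : A.IsHermitian) :
    (1 + A).det = ∏ i, (1 + hA.eigenvalues i : 𝕜) := by
  have h : 1 + A = cfc (fun x : ℝ => 1 + x) A := by
    rw [cfc_add .., cfc_const_one .., cfc_id' ..]
  rw [h, hA.cfc_eq, IsHermitian.cfc]
  simp [-Unitary.conjStarAlgAut_apply]

lemma PosSemidef.one_le_det_one_add {A : Matrix n n 𝕜} (hA : A.PosSemidef) :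
    1 ≤ (1 + A).det := by
  rw [hA.isHermitian.det_one_add]
  exact_mod_cast Finset.one_le_prod fun i _ => le_add_of_nonneg_right (hA.eigenvalues_nonneg i)

open scoped MatrixOrder in
lemma PosDef.det_le_det_add {S X : Matrix n n 𝕜} (hS : S.PosDef) (hX : X.PosSemidef) :
    S.det ≤ (S + X).det := by
  obtain ⟨B, rfl⟩ := CStarAlgebra.nonneg_iff_eq_star_mul_self.mp hX.nonneg
  rw [star_eq_conjTranspose, det_add_mul _ _ (isUnit_iff_isUnit_det _ |>.mp hS.isUnit)]
  have hY : (B * S⁻¹ * Bᴴ).PosSemidef := by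
    simpa using hS.inv.posSemidef.conjTranspose_mul_mul_same Bᴴ
  simpa using mul_le_mul_of_nonneg_left hY.one_le_det_one_add hS.det_pos.le

lemma PosSemidef.det_le_det_add {S X : Matrix n n 𝕜} (hS : S.PosSemidef) (hX : X.PosSemidef) :
    S.det ≤ (S + X).det := by
  by_cases hSd : S.PosDef
  · exact hSd.det_le_det_add hX
  · rw [hS.posDef_iff_det_ne_zero, not_not] at hSd
    exact hSd ▸ (hS.add hX).det_nonneg

variable {m : Type*} [Fintype m] [DecidableEq m]

theorem PosDef.det_fromBlocks_le {A : Matrix n n 𝕜} {B : Matrix m m 𝕜} {C : Matrix n m 𝕜}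
    (hA : A.PosDef) (hF : (fromBlocks A C Cᴴ B).PosSemidef) :
    (fromBlocks A C Cᴴ B).det ≤ A.det * B.det := by
  have : Invertible A := hA.isUnit.invertible
  have hS : (B - Cᴴ * A⁻¹ * C).PosSemidef := (hA.fromBlocks₁₁ C B).mp hF
  have hX : (Cᴴ * A⁻¹ * C).PosSemidef := hA.inv.posSemidef.conjTranspose_mul_mul_same C
  rw [det_fromBlocks₁₁, invOf_eq_nonsing_inv]
  gcongr
  · exact hA.det_pos.le
  · simpa using hS.det_le_det_add hX

end Matrix

lemma sq_sub_four_mul_pos {a b c d : ℝ} (ha : 0 ≤ a) (hb : 0 ≤ b) (hc : c < 0) (hd : d ≤ a * b) :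
    0 < (a + b - 2 * c) ^ 2 - 4 * d := by
  have hcross : 0 < -c * (a + b - c) := mul_pos (neg_pos.2 hc) (by linarith)
  nlinarith [sq_nonneg (a - b)]

theorem stmt14_general (FA FB FC : Matrix (Fin 2) (Fin 2) ℝ)
    (hFA : FA.PosDef) (hFB : FB.PosDef)
    (hFC : FC.det < 0)
    (hF : (Matrix.fromBlocks FA FC FCᵀ FB).PosSemidef) :
    0 < FA.det + FB.det - 2 * FC.det ∧
    0 < (FA.det + FB.det - 2 * FC.det) ^ 2 - 4 * (Matrix.fromBlocks FA FC FCᵀ FB).det ∧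
    ((Matrix.fromBlocks FA FC FCᵀ FB).PosDef →
      0 < (FA.det + FB.det - 2 * FC.det) -
        Real.sqrt ((FA.det + FB.det - 2 * FC.det) ^ 2 -
          4 * (Matrix.fromBlocks FA FC FCᵀ FB).det)) := by
  have ha := hFA.det_pos
  have hb := hFB.det_pos
  have hΔ : 0 < FA.det + FB.det - 2 * FC.det := by linarith
  have hFischer : (fromBlocks FA FC FCᵀ FB).det ≤ FA.det * FB.det := by
    rw [← conjTranspose_eq_transpose_of_trivial] at hF ⊢
    exact hFA.det_fromBlocks_le hF
  have hdisc := sq_sub_four_mul_pos ha.le hb.le hFC hFischer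
  refine ⟨hΔ, hdisc, fun hPD => sub_pos.2 ((Real.sqrt_lt' hΔ).2 ?_)⟩
  linarith [hPD.det_pos]

/-- Finite-dimensional core of the proof that entanglement between local modes decreases
with the Hubble rate: for `2×2` real symmetric positive-definite `F_A, F_B`, a `2×2` real
`F_C` with `det F_C < 0`, such that the block matrix `F = [[F_A, F_C], [F_Cᵀ, F_B]]` is
positive semidefinite, setting `Δ̃ = det F_A + det F_B - 2 det F_C` one has
(i) `Δ̃ > 0`, (ii) `Δ̃² - 4 det F > 0`, and (iii) if `F` is positive definite then
`Δ̃ - √(Δ̃² - 4 det F) > 0`. -/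
theorem stmt14 (FA FB FC : Matrix (Fin 2) (Fin 2) ℝ)
    (hFAsymm : FA.IsSymm) (hFBsymm : FB.IsSymm)
    (hFA : FA.PosDef) (hFB : FB.PosDef)
    (hFC : FC.det < 0)
    (hF : (Matrix.fromBlocks FA FC FCᵀ FB).PosSemidef) :
    0 < FA.det + FB.det - 2 * FC.det ∧
    0 < (FA.det + FB.det - 2 * FC.det) ^ 2 - 4 * (Matrix.fromBlocks FA FC FCᵀ FB).det ∧
    ((Matrix.fromBlocks FA FC FCᵀ FB).PosDef →
      0 < (FA.det + FB.det - 2 * FC.det) -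
        Real.sqrt ((FA.det + FB.det - 2 * FC.det) ^ 2 -
          4 * (Matrix.fromBlocks FA FC FCᵀ FB).det)) :=
  stmt14_general FA FB FC hFA hFB hFC hF
end
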